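/- arXiv:2205.09310 — 6 statements merged into one kernel-verified Lean document; each statement's English description precedes it below -/
import Mathlib

section
/- Let k be a positive integer, f : Fin k → ℝ a logit vector, and s > 1 a real scalar. If the index c maximizes f (i.e., f i ≤ f c for all i), then σ_c(s • f) ≥ σ_c(f), where σ_c denotes the softmax probability at index c. That is, increasing the magnitude of the logit vector does not decrease the softmax confidence score at the predicted class. -/
open Finset

lemma div_sum_le_div_sum_of_mul_le {ι : Type*} [Fintype ι] {a b : ι → ℝ} {c : ι}
    (ha : ∀ i, 0 < a i) (hb : ∀ i, 0 < b i) (h : ∀ i, a c * b i ≤ b c * a i) :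
    a c / ∑ i, a i ≤ b c / ∑ i, b i := by
  have hne : (univ : Finset ι).Nonempty := ⟨c, mem_univ c⟩
  rw [div_le_div_iff₀ (sum_pos (fun i _ => ha i) hne) (sum_pos (fun i _ => hb i) hne),
    mul_sum, mul_sum]
  exact sum_le_sum fun i _ => h i

lemma exp_mul_exp_mul_le {x y s : ℝ} (hxy : x ≤ y) (hs : 1 ≤ s) :
    Real.exp y * Real.exp (s * x) ≤ Real.exp (s * y) * Real.exp x := by
  rw [← Real.exp_add, ← Real.exp_add, Real.exp_le_exp]
  nlinarith

theorem softmax_le_softmax_scaled_general (k : ℕ) (f : Fin k → ℝ)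
    (s : ℝ) (hs : 1 < s) (c : Fin k) (hc : ∀ i, f i ≤ f c) :
    Real.exp (f c) / ∑ i, Real.exp (f i) ≤
      Real.exp (s * f c) / ∑ i, Real.exp (s * f i) :=
  div_sum_le_div_sum_of_mul_le (fun _ => Real.exp_pos _) (fun _ => Real.exp_pos _)
    fun i => exp_mul_exp_mul_le (hc i) hs.le

/-- If index `c` maximizes the logit vector `f`, then for any
scalar `s > 1`, the softmax probability at `c` of `s • f` is at least that of `f`. -/
theorem softmax_le_softmax_scaled (k : ℕ) (hk : 0 < k) (f : Fin k → ℝ)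
    (s : ℝ) (hs : 1 < s) (c : Fin k) (hc : ∀ i, f i ≤ f c) :
    Real.exp (f c) / ∑ i, Real.exp (f i) ≤
      Real.exp (s * f c) / ∑ i, Real.exp (s * f i) :=
  softmax_le_softmax_scaled_general k f s hs c hc
end

section
/- Let k be a positive integer, τ > 0 a real temperature parameter, f : Fin k → ℝ a nonzero logit vector with Euclidean norm ‖f‖ = sqrt(∑_i (f i)^2), and y : Fin k a label. Then the per-sample LogitNorm loss satisfies the lower bound L(f, y) = -log( exp(f y / (τ‖f‖)) / ∑_i exp(f i / (τ‖f‖)) ) ≥ log(1 + (k - 1) * exp(-2/τ)). -/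
/-!
Writing `z i = f i / (τ ‖f‖)`, the loss is the log-sum-exp `log ∑ i, exp (z i - z y)`. Every
normalized logit lies in `[-1/τ, 1/τ]`, so each of the `k - 1` terms with `i ≠ y` is at least
`exp (-2/τ)`, while the term `i = y` equals `1`.
-/

open Finset Real

section LogSoftmax

variable {ι : Type*} [Fintype ι]

theorem neg_log_softmax_eq_log_sum_exp_sub (z : ι → ℝ) (y : ι) :
    -log (exp (z y) / ∑ i, exp (z i)) = log (∑ i, exp (z i - z y)) := by
  have hS : ∑ i, exp (z i) ≠ 0 := (sum_pos (fun i _ ↦ exp_pos (z i)) ⟨y, mem_univ y⟩).ne'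
  simp only [exp_sub, ← sum_div, log_div (exp_ne_zero _) hS, log_div hS (exp_ne_zero _), log_exp,
    neg_sub]

theorem one_add_card_sub_one_mul_exp_neg_le_sum_exp_sub {z : ι → ℝ} {y : ι} {c : ℝ}
    (hz : ∀ i, z y - c ≤ z i) :
    1 + (Fintype.card ι - 1) * exp (-c) ≤ ∑ i, exp (z i - z y) := by
  classical
  rw [← add_sum_erase _ _ (mem_univ y), sub_self, exp_zero, ← card_univ,
    ← cast_card_erase_of_mem (mem_univ y), ← nsmul_eq_mul]
  gcongr
  exact card_nsmul_le_sum _ _ _ fun i _ ↦ exp_le_exp.mpr (by linarith [hz i])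

theorem log_one_add_card_sub_one_mul_exp_neg_le_neg_log_softmax {z : ι → ℝ} {y : ι} {c : ℝ}
    (hz : ∀ i, z y - c ≤ z i) :
    log (1 + (Fintype.card ι - 1) * exp (-c)) ≤ -log (exp (z y) / ∑ i, exp (z i)) := by
  rw [neg_log_softmax_eq_log_sum_exp_sub]
  refine log_le_log ?_ (one_add_card_sub_one_mul_exp_neg_le_sum_exp_sub hz)
  have : (1 : ℝ) ≤ Fintype.card ι := by exact_mod_cast Fintype.card_pos_iff.mpr ⟨y⟩
  positivity

theorem abs_div_mul_sqrt_sum_sq_le (f : ι → ℝ) (i : ι) (τ : ℝ) :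
    |f i / (τ * √(∑ j, f j ^ 2))| ≤ |τ|⁻¹ := by
  rw [abs_div, abs_mul, abs_of_nonneg (sqrt_nonneg _), mul_comm, ← div_div, div_eq_mul_inv]
  refine mul_le_of_le_one_left (inv_nonneg.mpr (abs_nonneg τ))
    (div_le_one_of_le₀ ?_ (sqrt_nonneg _))
  exact abs_le_sqrt (single_le_sum (fun j _ ↦ sq_nonneg (f j)) (mem_univ i))

end LogSoftmax

theorem logitNorm_loss_lower_bound_general (k : ℕ) (τ : ℝ) (hτ : 0 < τ)
    (f : Fin k → ℝ) (y : Fin k) :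
    Real.log (1 + (k - 1) * Real.exp (-2 / τ)) ≤
      -Real.log (Real.exp (f y / (τ * Real.sqrt (∑ i, (f i) ^ 2))) /
        ∑ i, Real.exp (f i / (τ * Real.sqrt (∑ j, (f j) ^ 2)))) := by
  have hz (i : Fin k) : |f i / (τ * √(∑ j, f j ^ 2))| ≤ τ⁻¹ := by
    simpa only [abs_of_pos hτ] using abs_div_mul_sqrt_sum_sq_le f i τ
  have := log_one_add_card_sub_one_mul_exp_neg_le_neg_log_softmax
    (z := fun i ↦ f i / (τ * √(∑ j, f j ^ 2))) (y := y) (c := 2 / τ)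
    fun i ↦ by linarith [abs_le.mp (hz i), abs_le.mp (hz y), two_mul τ⁻¹, div_eq_mul_inv 2 τ]
  simpa [neg_div] using this

/-- Lower bound of the LogitNorm loss. -/
theorem logitNorm_loss_lower_bound (k : ℕ) (hk : 0 < k) (τ : ℝ) (hτ : 0 < τ)
    (f : Fin k → ℝ) (hf : f ≠ 0) (y : Fin k) :
    Real.log (1 + (k - 1) * Real.exp (-2 / τ)) ≤
      -Real.log (Real.exp (f y / (τ * Real.sqrt (∑ i, (f i) ^ 2))) /
        ∑ i, Real.exp (f i / (τ * Real.sqrt (∑ j, (f j) ^ 2)))) :=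
  logitNorm_loss_lower_bound_general k τ hτ f y
end

section
/- Let k be a positive integer, τ > 0 a real number, and g : Fin k → ℝ a vector whose Euclidean norm satisfies sqrt(∑_i (g i)^2) = 1/τ. Then every component is bounded: -1/τ ≤ g i ≤ 1/τ for all i, and consequently for every label y the cross-entropy loss of g satisfies -log( exp(g y) / ∑_i exp(g i) ) ≥ log(1 + (k - 1) * exp(-2/τ)). -/
/-! Each coordinate is bounded by the Euclidean norm, so any two logits differ by at most
`2/τ`. Writing the loss as `log ∑ᵢ exp (g i - g y)`, the term `i = y` contributes `1` and each of
the other `k - 1` terms is at least `exp (-2/τ)`. -/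

open Finset Real

theorem abs_le_sqrt_sum_sq {ι : Type*} [Fintype ι] (g : ι → ℝ) (i : ι) :
    |g i| ≤ √(∑ j, g j ^ 2) :=
  abs_le_sqrt (single_le_sum (fun j _ => sq_nonneg (g j)) (mem_univ i))

theorem neg_log_exp_div_sum_exp {ι : Type*} [Fintype ι] (g : ι → ℝ) (y : ι) :
    -log (exp (g y) / ∑ i, exp (g i)) = log (∑ i, exp (g i - g y)) := by
  simp_rw [exp_sub, ← sum_div]
  rw [← log_inv, inv_div]

theorem one_add_card_sub_one_mul_exp_le_sum_exp_sub {ι : Type*} [Fintype ι] [DecidableEq ι]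
    (g : ι → ℝ) (y : ι) {c : ℝ} (hc : ∀ i, i ≠ y → c ≤ g i - g y) :
    1 + (Fintype.card ι - 1) * exp c ≤ ∑ i, exp (g i - g y) := by
  have hcard : ((univ.erase y).card : ℝ) = Fintype.card ι - 1 := by
    rw [card_erase_of_mem (mem_univ y), card_univ, Nat.cast_sub (Fintype.card_pos_iff.mpr ⟨y⟩), Nat.cast_one]
  have hrest := card_nsmul_le_sum (univ.erase y) (fun i => exp (g i - g y)) (exp c)
    fun i hi => exp_le_exp.mpr (hc i (ne_of_mem_erase hi))
  rw [nsmul_eq_mul, hcard] at hrest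
  rw [← sum_erase_add _ _ (mem_univ y), sub_self, exp_zero]
  linarith

theorem log_one_add_mul_exp_le_neg_log_exp_div_sum_exp {ι : Type*} [Fintype ι] (g : ι → ℝ)
    {a b : ℝ} (hg : ∀ i, a ≤ g i ∧ g i ≤ b) (y : ι) :
    log (1 + (Fintype.card ι - 1) * exp (a - b)) ≤ -log (exp (g y) / ∑ i, exp (g i)) := by
  classical
  have hcard : (1 : ℝ) ≤ Fintype.card ι := Nat.one_le_cast.mpr (Fintype.card_pos_iff.mpr ⟨y⟩)
  have hpos : 0 < 1 + (Fintype.card ι - 1) * exp (a - b) := by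
    have := exp_pos (a - b)
    positivity
  rw [neg_log_exp_div_sum_exp]
  refine log_le_log hpos (one_add_card_sub_one_mul_exp_le_sum_exp_sub g y fun i _ => ?_)
  linarith [(hg i).1, (hg y).2]

theorem component_bounds_and_loss_lower_bound_of_norm_general (k : ℕ)
    (τ : ℝ) (g : Fin k → ℝ)
    (hg : Real.sqrt (∑ i, (g i) ^ 2) = 1 / τ) :
    (∀ i, -1 / τ ≤ g i ∧ g i ≤ 1 / τ) ∧
    ∀ y : Fin k,
      Real.log (1 + (k - 1) * Real.exp (-2 / τ)) ≤
        -Real.log (Real.exp (g y) / ∑ i, Real.exp (g i)) := by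
  have hbounds : ∀ i, -1 / τ ≤ g i ∧ g i ≤ 1 / τ := fun i => by
    rw [neg_div, ← abs_le, ← hg]
    exact abs_le_sqrt_sum_sq g i
  refine ⟨hbounds, fun y => ?_⟩
  have h := log_one_add_mul_exp_le_neg_log_exp_div_sum_exp g hbounds y
  rwa [Fintype.card_fin, show -1 / τ - 1 / τ = -2 / τ by ring] at h

/-- If the Euclidean norm of `g` equals `1/τ`, then every
component is bounded in `[-1/τ, 1/τ]`, and the cross-entropy loss at every
label is at least `log(1 + (k-1) exp(-2/τ))`. -/
theorem component_bounds_and_loss_lower_bound_of_norm (k : ℕ) (hk : 0 < k)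
    (τ : ℝ) (hτ : 0 < τ) (g : Fin k → ℝ)
    (hg : Real.sqrt (∑ i, (g i) ^ 2) = 1 / τ) :
    (∀ i, -1 / τ ≤ g i ∧ g i ≤ 1 / τ) ∧
    ∀ y : Fin k,
      Real.log (1 + (k - 1) * Real.exp (-2 / τ)) ≤
        -Real.log (Real.exp (g y) / ∑ i, Real.exp (g i)) :=
  component_bounds_and_loss_lower_bound_of_norm_general k τ g hg
end

section
/- Let k be a positive integer, f : Fin k → ℝ a logit vector, and y an index that maximizes f (i.e., f i ≤ f y for all i). Then for every real scalar s > 1, the softmax cross-entropy loss does not increase under scaling: -log( exp(s * f y) / ∑_i exp(s * f i) ) ≤ -log( exp(f y) / ∑_i exp(f i) ). That is, for a training example that is already classified correctly, increasing the magnitude of the logit vector decreases (or keeps equal) the cross-entropy loss. -/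
/-! Dividing numerator and denominator by `exp (f y)`, the loss is `log ∑ i, exp (f i - f y)`.
Every exponent `f i - f y` is nonpositive when `y` is an argmax, so scaling the logits by `s`
can only shrink each summand as `s` grows. -/

open Real Finset

noncomputable def crossEntropy {ι : Type*} [Fintype ι] (f : ι → ℝ) (y : ι) : ℝ :=
  -log (exp (f y) / ∑ i, exp (f i))

theorem crossEntropy_eq_log_sum_exp_sub {ι : Type*} [Fintype ι] (f : ι → ℝ) (y : ι) :
    crossEntropy f y = log (∑ i, exp (f i - f y)) := by
  simp only [crossEntropy, ← log_inv, inv_div, sum_div, exp_sub]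

theorem crossEntropy_mul_antitone {ι : Type*} [Fintype ι] {f : ι → ℝ} {y : ι}
    (hy : ∀ i, f i ≤ f y) : Antitone fun s : ℝ => crossEntropy (fun i => s * f i) y := by
  intro s t hst
  simp only [crossEntropy_eq_log_sum_exp_sub, ← mul_sub]
  have hpos : 0 < ∑ i, exp (t * (f i - f y)) := sum_pos (fun i _ => exp_pos _) ⟨y, mem_univ y⟩
  refine log_le_log hpos (sum_le_sum fun i _ => ?_)
  exact exp_le_exp.mpr (mul_le_mul_of_nonpos_right hst (sub_nonpos.mpr (hy i)))

theorem crossEntropy_nonincreasing_under_scaling_general (k : ℕ)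
    (f : Fin k → ℝ) (y : Fin k) (hy : ∀ i, f i ≤ f y) :
    ∀ s : ℝ, 1 < s →
      -Real.log (Real.exp (s * f y) / ∑ i, Real.exp (s * f i)) ≤
        -Real.log (Real.exp (f y) / ∑ i, Real.exp (f i)) := by
  intro s hs
  simpa only [crossEntropy, one_mul] using crossEntropy_mul_antitone hy hs.le

/-- If `y` maximizes `f`, then scaling by `s > 1` does not
increase the softmax cross-entropy loss at `y`. -/
theorem crossEntropy_nonincreasing_under_scaling (k : ℕ) (hk : 0 < k)
    (f : Fin k → ℝ) (y : Fin k) (hy : ∀ i, f i ≤ f y) :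
    ∀ s : ℝ, 1 < s →
      -Real.log (Real.exp (s * f y) / ∑ i, Real.exp (s * f i)) ≤
        -Real.log (Real.exp (f y) / ∑ i, Real.exp (f i)) :=
  crossEntropy_nonincreasing_under_scaling_general k f y hy
end

section
/- Let k be a positive integer, f : Fin k → ℝ a logit vector, and c an index that maximizes f (i.e., f i ≤ f c for all i). Then for all real scalars s₁, s₂ with 0 < s₁ ≤ s₂, the softmax probability at c is monotone in the scale: σ_c(s₁ • f) ≤ σ_c(s₂ • f), where σ_c(g) = exp(g c) / ∑_i exp(g i). -/
/-!
Dividing numerator and denominator by `exp (s * f c)` writes the softmax probability at `c` as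
`(∑ i, exp (s * (f i - f c)))⁻¹`. At an argmax every exponent `f i - f c` is nonpositive, so each
summand, hence the sum, decreases in `s`, and its inverse increases.
-/

open Finset Real

noncomputable section

variable {ι : Type*} [Fintype ι]

def softmax (g : ι → ℝ) (c : ι) : ℝ :=
  exp (g c) / ∑ i, exp (g i)

lemma softmax_smul_eq_inv_sum (f : ι → ℝ) (c : ι) (s : ℝ) :
    softmax (s • f) c = (∑ i, exp (s * (f i - f c)))⁻¹ := by
  have hsum : ∑ i, exp (s * f i) = (∑ i, exp (s * (f i - f c))) * exp (s * f c) := by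
    rw [sum_mul]
    refine sum_congr rfl fun i _ => ?_
    rw [← exp_add]
    ring_nf
  simp only [softmax, Pi.smul_apply, smul_eq_mul]
  rw [hsum, div_mul_eq_div_div_swap, div_self (exp_ne_zero _), one_div]

lemma antitone_sum_exp_mul_sub {f : ι → ℝ} {c : ι} (hc : ∀ i, f i ≤ f c) :
    Antitone fun s => ∑ i, exp (s * (f i - f c)) :=
  fun _ _ hs => sum_le_sum fun i _ =>
    exp_le_exp.2 (mul_le_mul_of_nonpos_right hs (sub_nonpos.2 (hc i)))

lemma monotone_softmax_smul {f : ι → ℝ} {c : ι} (hc : ∀ i, f i ≤ f c) :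
    Monotone fun s : ℝ => softmax (s • f) c := by
  have : Nonempty ι := ⟨c⟩
  intro s₁ s₂ hs
  simp only [softmax_smul_eq_inv_sum]
  exact inv_anti₀ (sum_pos (fun i _ => exp_pos _) univ_nonempty) (antitone_sum_exp_mul_sub hc hs)

end

theorem softmax_monotone_in_scale_general (k : ℕ) (f : Fin k → ℝ)
    (c : Fin k) (hc : ∀ i, f i ≤ f c) (s₁ s₂ : ℝ)
    (hs : s₁ ≤ s₂) :
    Real.exp (s₁ * f c) / ∑ i, Real.exp (s₁ * f i) ≤
      Real.exp (s₂ * f c) / ∑ i, Real.exp (s₂ * f i) :=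
  monotone_softmax_smul hc hs

/-- If `c` maximizes `f`, the softmax probability at `c` is
monotone in the positive scale. -/
theorem softmax_monotone_in_scale (k : ℕ) (hk : 0 < k) (f : Fin k → ℝ)
    (c : Fin k) (hc : ∀ i, f i ≤ f c) (s₁ s₂ : ℝ) (hs₁ : 0 < s₁)
    (hs : s₁ ≤ s₂) :
    Real.exp (s₁ * f c) / ∑ i, Real.exp (s₁ * f i) ≤
      Real.exp (s₂ * f c) / ∑ i, Real.exp (s₂ * f i) :=
  softmax_monotone_in_scale_general k f c hc s₁ s₂ hs
end

section
/- Let k be a positive integer, f : Fin k → ℝ a logit vector, and c an index that maximizes f (i.e., f i ≤ f c for all i) and such that f is not constant at its maximum (i.e., there exists an index j with f j < f c). Then for every real scalar s > 1 the softmax probability at c strictly increases under scaling: σ_c(s • f) > σ_c(f), where σ_c(g) = exp(g c) / ∑_i exp(g i). -/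
/-!
After dividing by `exp (g c)`, the softmax probability at `c` is `(∑ i, exp (g i - g c))⁻¹`.
For an argmax `c` every exponent `f i - f c` is nonpositive, so scaling by `s > 1` can only
shrink it, and strictly shrinks it at an index `j` with `f j < f c`; hence the denominator
strictly decreases.
-/

open Finset Real

theorem exp_div_sum_exp_eq_inv_sum_exp_sub {ι : Type*} [Fintype ι] (g : ι → ℝ) (c : ι) :
    exp (g c) / ∑ i, exp (g i) = (∑ i, exp (g i - g c))⁻¹ := by
  simp_rw [exp_sub, ← sum_div, inv_div]

theorem sum_exp_sub_pos {ι : Type*} [Fintype ι] (g : ι → ℝ) (c : ι) :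
    0 < ∑ i, exp (g i - g c) :=
  sum_pos (fun _ _ => exp_pos _) ⟨c, mem_univ c⟩

theorem sum_exp_mul_sub_lt_sum_exp_sub {ι : Type*} [Fintype ι] {f : ι → ℝ} {c : ι}
    (hc : ∀ i, f i ≤ f c) (hne : ∃ j, f j < f c) {s : ℝ} (hs : 1 < s) :
    ∑ i, exp (s * f i - s * f c) < ∑ i, exp (f i - f c) := by
  obtain ⟨j, hj⟩ := hne
  refine sum_lt_sum (fun i _ => exp_le_exp.mpr ?_) ⟨j, mem_univ j, exp_lt_exp.mpr ?_⟩
  · nlinarith [hc i]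
  · nlinarith

theorem softmax_strict_increase_under_scaling_general (k : ℕ)
    (f : Fin k → ℝ) (c : Fin k) (hc : ∀ i, f i ≤ f c)
    (hne : ∃ j, f j < f c) (s : ℝ) (hs : 1 < s) :
    Real.exp (f c) / ∑ i, Real.exp (f i) <
      Real.exp (s * f c) / ∑ i, Real.exp (s * f i) := by
  rw [exp_div_sum_exp_eq_inv_sum_exp_sub f c,
    exp_div_sum_exp_eq_inv_sum_exp_sub (fun i => s * f i) c,
    inv_lt_inv₀ (sum_exp_sub_pos _ c) (sum_exp_sub_pos _ c)]
  exact sum_exp_mul_sub_lt_sum_exp_sub hc hne hs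

/-- If `c` maximizes `f` and `f` is not constant at its maximum,
then for every `s > 1` the softmax probability at `c` strictly increases
under scaling by `s`. -/
theorem softmax_strict_increase_under_scaling (k : ℕ) (hk : 0 < k)
    (f : Fin k → ℝ) (c : Fin k) (hc : ∀ i, f i ≤ f c)
    (hne : ∃ j, f j < f c) (s : ℝ) (hs : 1 < s) :
    Real.exp (f c) / ∑ i, Real.exp (f i) <
      Real.exp (s * f c) / ∑ i, Real.exp (s * f i) :=
  softmax_strict_increase_under_scaling_general k f c hc hne s hs
end
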